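/- Let A ⊆ R ⊆ S be commutative Noetherian rings such that the inclusion R ⊆ S admits an R-linear splitting β : S → R, and let f ∈ R be nonzero. If b(s) ∈ A[s] and δ(s) ∈ D_{S|A}[s] satisfy δ(t)·f^{t+1} = b(t)·f^t in S_f for every t ∈ ℤ, then the operator δ̃(s) := β∘δ(s)|_R ∈ D_{R|A}[s] satisfies δ̃(t)·f^{t+1} = b(t)·f^t in R_f for every t ∈ ℤ. In particular, the Bernstein–Sato ideal of f over S is contained in the Bernstein–Sato ideal of f over R; hence if A = K is a field and b^{S_K}_f(s) exists, then b^{R_K}_f(s) exists and divides b^{S_K}_f(s). -/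

import Mathlib

/-- `δ` is an `A`-linear differential operator on `R` of order at most `n`. -/
def IsDiffOpOfOrder (A : Type*) {R : Type*} [CommRing A] [CommRing R] [Algebra A R] :
    ℕ → (R →ₗ[A] R) → Prop
  | 0 => fun δ => ∃ r : R, ∀ x, δ x = r * x
  | (n+1) => fun δ => ∀ r : R,
      IsDiffOpOfOrder A n (δ ∘ₗ LinearMap.mulLeft A r - LinearMap.mulLeft A r ∘ₗ δ)

/-- `δ` is an `A`-linear differential operator on `R`. -/
def IsDiffOp (A : Type*) {R : Type*} [CommRing A] [CommRing R] [Algebra A R]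
    (δ : R →ₗ[A] R) : Prop :=
  ∃ n, IsDiffOpOfOrder A n δ

/-- Restriction `β ∘ δ|_R` of a differential operator `δ` on `S` along the
`R`-linear splitting `β : S → R`. -/
def restrictOp (A R S : Type*) [CommRing A] [CommRing R] [CommRing S]
    [Algebra A R] [Algebra A S] [Algebra R S] [IsScalarTower A R S]
    (β : S →ₗ[R] R) (δ : S →ₗ[A] S) : R →ₗ[A] R :=
  (β.restrictScalars A) ∘ₗ δ ∘ₗ ((IsScalarTower.toAlgHom A R S).toLinearMap)

/-- A `D_{R|A}`-module structure on an `R`-module `M`. -/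
structure DAction (A R : Type*) [CommRing A] [CommRing R] [Algebra A R]
    (M : Type*) [AddCommGroup M] [Module A M] [Module R M] [IsScalarTower A R M] where
  act : (R →ₗ[A] R) → (M →ₗ[A] M)
  act_mulLeft : ∀ (r : R) (m : M), act (LinearMap.mulLeft A r) m = r • m
  act_add : ∀ δ₁ δ₂, IsDiffOp A δ₁ → IsDiffOp A δ₂ → act (δ₁ + δ₂) = act δ₁ + act δ₂
  act_comp : ∀ δ₁ δ₂, IsDiffOp A δ₁ → IsDiffOp A δ₂ → act (δ₁ ∘ₗ δ₂) = act δ₁ ∘ₗ act δ₂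

/-- The tautological `D_{R|A}`-module structure on `R` itself. -/
def tautDAction (A R : Type*) [CommRing A] [CommRing R] [Algebra A R] : DAction A R R where
  act δ := δ
  act_mulLeft r m := by simp [LinearMap.mulLeft_apply, smul_eq_mul]
  act_add _ _ _ _ := rfl
  act_comp _ _ _ _ := rfl

/-- A differential direct summand `M ⊆ N` compatible with the splitting `β`. -/
structure DiffDirectSummand {A R S : Type*} [CommRing A] [CommRing R] [CommRing S]
    [Algebra A R] [Algebra A S] [Algebra R S] [IsScalarTower A R S]
    (β : S →ₗ[R] R)
    {M : Type*} [AddCommGroup M] [Module A M] [Module R M] [IsScalarTower A R M]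
    {N : Type*} [AddCommGroup N] [Module A N] [Module R N] [Module S N]
    [IsScalarTower A S N] [IsScalarTower R S N] [IsScalarTower A R N]
    (actM : DAction A R M) (actN : DAction A S N) where
  incl : M →ₗ[R] N
  incl_injective : Function.Injective incl
  theta : N →ₗ[R] M
  split : ∀ m : M, theta (incl m) = m
  compat : ∀ (δ : S →ₗ[A] S), IsDiffOp A δ → ∀ m : M,
      theta (actN.act δ (incl m)) = actM.act (restrictOp A R S β δ) m

/-- `V` is a `D_{R|A}`-submodule of `M`. -/
def DAction.IsDSubmodule {A R : Type*} [CommRing A] [CommRing R] [Algebra A R]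
    {M : Type*} [AddCommGroup M] [Module A M] [Module R M] [IsScalarTower A R M]
    (a : DAction A R M) (V : Submodule R M) : Prop :=
  ∀ δ : R →ₗ[A] R, IsDiffOp A δ → ∀ v ∈ V, a.act δ v ∈ V

/-- The length of `M` as a `D_{R|A}`-module: the supremum of lengths of chains of
`D_{R|A}`-submodules of `M`. -/
noncomputable def dLength {A R : Type*} [CommRing A] [CommRing R] [Algebra A R]
    {M : Type*} [AddCommGroup M] [Module A M] [Module R M] [IsScalarTower A R M]
    (a : DAction A R M) : WithBot ℕ∞ :=
  Order.krullDim {V : Submodule R M // a.IsDSubmodule V}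

/-- The canonical (localized) `D`-module structure on a localization: the one making
the localization map equivariant. -/
def IsLocalizedDAction {A R : Type*} [CommRing A] [CommRing R] [Algebra A R]
    {M Mf : Type*} [AddCommGroup M] [Module A M] [Module R M] [IsScalarTower A R M]
    [AddCommGroup Mf] [Module A Mf] [Module R Mf] [IsScalarTower A R Mf]
    (ℓ : M →ₗ[R] Mf) (a : DAction A R M) (a' : DAction A R Mf) : Prop :=
  ∀ δ : R →ₗ[A] R, IsDiffOp A δ → ∀ m : M, a'.act δ (ℓ m) = ℓ (a.act δ m)

/-- A morphism of differential direct summands. -/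
structure IsDDSHom {A R S : Type*} [CommRing A] [CommRing R] [CommRing S]
    [Algebra A R] [Algebra A S] [Algebra R S] [IsScalarTower A R S]
    {β : S →ₗ[R] R}
    {M₁ : Type*} [AddCommGroup M₁] [Module A M₁] [Module R M₁] [IsScalarTower A R M₁]
    {N₁ : Type*} [AddCommGroup N₁] [Module A N₁] [Module R N₁] [Module S N₁]
    [IsScalarTower A S N₁] [IsScalarTower R S N₁] [IsScalarTower A R N₁]
    {M₂ : Type*} [AddCommGroup M₂] [Module A M₂] [Module R M₂] [IsScalarTower A R M₂]
    {N₂ : Type*} [AddCommGroup N₂] [Module A N₂] [Module R N₂] [Module S N₂]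
    [IsScalarTower A S N₂] [IsScalarTower R S N₂] [IsScalarTower A R N₂]
    {actM₁ : DAction A R M₁} {actN₁ : DAction A S N₁}
    {actM₂ : DAction A R M₂} {actN₂ : DAction A S N₂}
    (dds₁ : DiffDirectSummand β actM₁ actN₁) (dds₂ : DiffDirectSummand β actM₂ actN₂)
    (φ : N₁ →ₗ[S] N₂) (ψ : M₁ →ₗ[R] M₂) : Prop where
  comm_incl : ∀ m : M₁, φ (dds₁.incl m) = dds₂.incl (ψ m)
  equivN : ∀ δ : S →ₗ[A] S, IsDiffOp A δ → ∀ x : N₁, φ (actN₁.act δ x) = actN₂.act δ (φ x)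
  equivM : ∀ δ : R →ₗ[A] R, IsDiffOp A δ → ∀ m : M₁, ψ (actM₁.act δ m) = actM₂.act δ (ψ m)
  comm_theta : ∀ x : N₁, ψ (dds₁.theta x) = dds₂.theta (φ x)

/-- `b ∈ A[s]` admits a Bernstein–Sato functional equation for `f` in `R`:
there is `δ(s) ∈ D_{R|A}[s]` with `δ(t)·f^{t+1} = b(t)·f^t` in `R_f` for all `t ∈ ℤ`.
Here `R_f` is an abstract localization in which `f` becomes the unit `hu.unit`,
carrying a `D_{R|A}`-module structure `actRf`. -/
def SatisfiesBS {A R Rf : Type*} [CommRing A] [CommRing R] [Algebra A R]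
    [CommRing Rf] [Algebra R Rf] [Algebra A Rf] [IsScalarTower A R Rf]
    (f : R) (hu : IsUnit (algebraMap R Rf f)) (actRf : DAction A R Rf)
    (b : Polynomial A) : Prop :=
  ∃ (m : ℕ) (d : ℕ → (R →ₗ[A] R)), (∀ j, IsDiffOp A (d j)) ∧
    ∀ t : ℤ, (actRf.act (∑ j ∈ Finset.range (m + 1), t ^ j • d j))
        ((hu.unit ^ (t + 1) : Rfˣ) : Rf) =
      Polynomial.eval (t : A) b • ((hu.unit ^ t : Rfˣ) : Rf)

section Lemmas
variable {A R : Type*} [CommRing A] [CommRing R] [Algebra A R]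

lemma isDiffOpOfOrder_congr {n : ℕ} {δ δ' : R →ₗ[A] R} (h : δ = δ')
    (hd : IsDiffOpOfOrder A n δ) : IsDiffOpOfOrder A n δ' := h ▸ hd

lemma IsDiffOpOfOrder.add : ∀ {n : ℕ} {δ₁ δ₂ : R →ₗ[A] R},
    IsDiffOpOfOrder A n δ₁ → IsDiffOpOfOrder A n δ₂ → IsDiffOpOfOrder A n (δ₁ + δ₂)
  | 0, δ₁, δ₂, ⟨r₁, h₁⟩, ⟨r₂, h₂⟩ => ⟨r₁ + r₂, fun x => by
      simp [h₁ x, h₂ x, add_mul]⟩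
  | (n+1), δ₁, δ₂, h₁, h₂ => fun r => by
      have := IsDiffOpOfOrder.add (h₁ r) (h₂ r)
      refine isDiffOpOfOrder_congr ?_ this
      ext x; simp; ring

lemma IsDiffOpOfOrder.mulLeft_comp : ∀ {n : ℕ} {δ : R →ₗ[A] R} (r : R),
    IsDiffOpOfOrder A n δ → IsDiffOpOfOrder A n (LinearMap.mulLeft A r ∘ₗ δ)
  | 0, δ, r, ⟨r₀, h₀⟩ => ⟨r * r₀, fun x => by simp [h₀ x, mul_assoc]⟩
  | (n+1), δ, r, h => fun r' => by
      refine isDiffOpOfOrder_congr ?_ (IsDiffOpOfOrder.mulLeft_comp r (h r'))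
      ext x; simp; ring

lemma IsDiffOpOfOrder.comp_mulLeft : ∀ {n : ℕ} {δ : R →ₗ[A] R} (r : R),
    IsDiffOpOfOrder A n δ → IsDiffOpOfOrder A n (δ ∘ₗ LinearMap.mulLeft A r)
  | 0, δ, r, ⟨r₀, h₀⟩ => ⟨r₀ * r, fun x => by simp [h₀]; ring⟩
  | (n+1), δ, r, h => fun r' => by
      refine isDiffOpOfOrder_congr ?_ (IsDiffOpOfOrder.comp_mulLeft r (h r'))
      ext x; simp; ring

lemma IsDiffOpOfOrder.neg : ∀ {n : ℕ} {δ : R →ₗ[A] R},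
    IsDiffOpOfOrder A n δ → IsDiffOpOfOrder A n (-δ)
  | 0, δ, ⟨r₀, h₀⟩ => ⟨-r₀, fun x => by simp [h₀ x]⟩
  | (n+1), δ, h => fun r => by
      refine isDiffOpOfOrder_congr ?_ (IsDiffOpOfOrder.neg (h r))
      ext x; simp; ring

lemma IsDiffOpOfOrder.succ : ∀ {n : ℕ} {δ : R →ₗ[A] R},
    IsDiffOpOfOrder A n δ → IsDiffOpOfOrder A (n+1) δ
  | 0, δ, ⟨r₀, h₀⟩ => fun r => ⟨0, fun x => by simp [h₀, h₀ x]; ring⟩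
  | (n+1), δ, h => fun r => IsDiffOpOfOrder.succ (h r)

lemma IsDiffOpOfOrder.mono {n m : ℕ} (hnm : n ≤ m) {δ : R →ₗ[A] R}
    (h : IsDiffOpOfOrder A n δ) : IsDiffOpOfOrder A m δ := by
  induction hnm with
  | refl => exact h
  | step _ ih => exact ih.succ

lemma IsDiffOpOfOrder.zsmul {n : ℕ} (z : ℤ) {δ : R →ₗ[A] R}
    (h : IsDiffOpOfOrder A n δ) : IsDiffOpOfOrder A n (z • δ) := by
  refine isDiffOpOfOrder_congr ?_ (h.mulLeft_comp (z : R))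
  ext x; simp [zsmul_eq_mul]

lemma IsDiffOpOfOrder.asmul {n : ℕ} (a : A) {δ : R →ₗ[A] R}
    (h : IsDiffOpOfOrder A n δ) : IsDiffOpOfOrder A n (a • δ) := by
  refine isDiffOpOfOrder_congr ?_ (h.mulLeft_comp (algebraMap A R a))
  ext x; simp [Algebra.smul_def]

lemma IsDiffOp.add {δ₁ δ₂ : R →ₗ[A] R} (h₁ : IsDiffOp A δ₁) (h₂ : IsDiffOp A δ₂) :
    IsDiffOp A (δ₁ + δ₂) := by
  obtain ⟨n₁, h₁⟩ := h₁; obtain ⟨n₂, h₂⟩ := h₂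
  exact ⟨max n₁ n₂, (h₁.mono (le_max_left _ _)).add (h₂.mono (le_max_right _ _))⟩

lemma IsDiffOp.zero : IsDiffOp A (0 : R →ₗ[A] R) := ⟨0, 0, fun x => by simp⟩

lemma IsDiffOp.zsmul (z : ℤ) {δ : R →ₗ[A] R} (h : IsDiffOp A δ) : IsDiffOp A (z • δ) :=
  h.imp fun _ h => h.zsmul z

lemma IsDiffOp.asmul (a : A) {δ : R →ₗ[A] R} (h : IsDiffOp A δ) : IsDiffOp A (a • δ) :=
  h.imp fun _ h => h.asmul a

lemma IsDiffOp.sum {ι : Type*} (s : Finset ι) (d : ι → (R →ₗ[A] R))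
    (hd : ∀ i ∈ s, IsDiffOp A (d i)) : IsDiffOp A (∑ i ∈ s, d i) := by
  classical
  induction s using Finset.induction with
  | empty => simpa using IsDiffOp.zero
  | insert _ _ hni ih =>
      rw [Finset.sum_insert hni]
      exact (hd _ (Finset.mem_insert_self _ _)).add
        (ih fun i hi => hd i (Finset.mem_insert_of_mem hi))

lemma IsDiffOp.mulLeft (r : R) : IsDiffOp A (LinearMap.mulLeft A r) :=
  ⟨0, r, fun x => by simp⟩

end Lemmas


section RO
variable {A R S : Type*} [CommRing A] [CommRing R] [CommRing S]
    [Algebra A R] [Algebra A S] [Algebra R S] [IsScalarTower A R S]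
    (β : S →ₗ[R] R)

lemma restrictOp_apply (δ : S →ₗ[A] S) (r : R) :
    restrictOp A R S β δ r = β (δ (algebraMap R S r)) := rfl

lemma beta_alg_mul (r : R) (s : S) : β (algebraMap R S r * s) = r * β s := by
  rw [← Algebra.smul_def, map_smul, smul_eq_mul]

lemma restrictOp_commutator (δ : S →ₗ[A] S) (g : R) :
    restrictOp A R S β (δ ∘ₗ LinearMap.mulLeft A (algebraMap R S g)
        - LinearMap.mulLeft A (algebraMap R S g) ∘ₗ δ)
      = restrictOp A R S β δ ∘ₗ LinearMap.mulLeft A g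
        - LinearMap.mulLeft A g ∘ₗ restrictOp A R S β δ := by
  ext x
  simp only [LinearMap.sub_apply, LinearMap.coe_comp, Function.comp_apply,
    LinearMap.mulLeft_apply, restrictOp_apply, map_sub]
  rw [beta_alg_mul, ← map_mul]

lemma restrictOp_order : ∀ {n : ℕ} {δ : S →ₗ[A] S}, IsDiffOpOfOrder A n δ →
    IsDiffOpOfOrder A n (restrictOp A R S β δ)
  | 0, δ, ⟨s₀, h₀⟩ => ⟨β s₀, fun x => by
      rw [restrictOp_apply, h₀, mul_comm, beta_alg_mul, mul_comm]⟩
  | (n+1), δ, h => fun r => by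
      refine isDiffOpOfOrder_congr (restrictOp_commutator β δ r) ?_
      exact restrictOp_order (h (algebraMap R S r))

lemma restrictOp_add (δ₁ δ₂ : S →ₗ[A] S) :
    restrictOp A R S β (δ₁ + δ₂) = restrictOp A R S β δ₁ + restrictOp A R S β δ₂ := by
  ext x; simp [restrictOp_apply]

lemma restrictOp_zsmul (z : ℤ) (δ : S →ₗ[A] S) :
    restrictOp A R S β (z • δ) = z • restrictOp A R S β δ := by
  ext x
  show β ((z • δ) (algebraMap R S x)) = z • β (δ (algebraMap R S x))
  rw [LinearMap.smul_apply, map_zsmul]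

lemma restrictOp_sum {ι : Type*} (s : Finset ι) (d : ι → (S →ₗ[A] S)) :
    restrictOp A R S β (∑ i ∈ s, d i) = ∑ i ∈ s, restrictOp A R S β (d i) := by
  classical
  induction s using Finset.induction with
  | empty => ext x; simp [restrictOp_apply]
  | insert _ _ hni ih => rw [Finset.sum_insert hni, Finset.sum_insert hni, restrictOp_add, ih]

end RO


lemma smul_Sf_R {R : Type*} (S : Type*) {Sf : Type*} [CommRing R] [CommRing S]
    [Algebra R S] [CommRing Sf] [Algebra S Sf] [Algebra R Sf] [IsScalarTower R S Sf]
    (r : R) (z : Sf) :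
    r • z = algebraMap S Sf (algebraMap R S r) * z := by
  rw [Algebra.smul_def, IsScalarTower.algebraMap_apply R S Sf]

section Loc
set_option linter.unusedSectionVars false

variable {R : Type*} (S : Type*) [CommRing R] [CommRing S] [Algebra R S]
  (f : R)
  (Rf : Type*) [CommRing Rf] [Algebra R Rf] [IsLocalization.Away f Rf]
  (Sf : Type*) [CommRing Sf] [Algebra S Sf]
  [IsLocalization.Away (algebraMap R S f) Sf]
  [Algebra R Sf] [IsScalarTower R S Sf]

lemma powers_le_comap : Submonoid.powers f ≤
    (Submonoid.powers (algebraMap R S f)).comap (algebraMap R S) := by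
  rintro x ⟨k, rfl⟩
  exact ⟨k, by simp [map_pow]⟩

/-- The canonical map `R_f → S_f`. -/
noncomputable def iotaLoc : Rf →+* Sf :=
  IsLocalization.map (M := Submonoid.powers f)
    (T := Submonoid.powers (algebraMap R S f)) Sf (algebraMap R S) (powers_le_comap S f)

lemma iotaLoc_alg (r : R) :
    iotaLoc S f Rf Sf (algebraMap R Rf r) = algebraMap S Sf (algebraMap R S r) :=
  IsLocalization.map_eq _ r

lemma end_units_Rf (hu : IsUnit (algebraMap R Rf f)) (x : Submonoid.powers f) :
    IsUnit (algebraMap R (Module.End R Rf) x) := by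
  obtain ⟨x, k, rfl⟩ := x
  have h1 : IsUnit (algebraMap R Rf (f ^ k)) := by rw [map_pow]; exact hu.pow k
  have h2 := h1.map (Algebra.lmul R Rf)
  rwa [(Algebra.lmul R Rf).commutes] at h2

lemma isLocalizedModule_Sf :
    IsLocalizedModule (Submonoid.powers f) (IsScalarTower.toAlgHom R S Sf).toLinearMap := by
  refine isLocalizedModule_iff_isLocalization.mpr ?_
  have h : Algebra.algebraMapSubmonoid S (Submonoid.powers f)
      = Submonoid.powers (algebraMap R S f) := by
    rw [Algebra.algebraMapSubmonoid, Submonoid.map_powers]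
  rw [h]
  infer_instance

/-- The splitting `S_f → R_f` induced by `β`. -/
noncomputable def thetaLoc (β : S →ₗ[R] R) (hu : IsUnit (algebraMap R Rf f)) :
    Sf →ₗ[R] Rf :=
  haveI := isLocalizedModule_Sf S f Sf
  IsLocalizedModule.lift (Submonoid.powers f)
    (IsScalarTower.toAlgHom R S Sf).toLinearMap
    ((Algebra.linearMap R Rf).comp β) (end_units_Rf f Rf hu)

lemma thetaLoc_alg (β : S →ₗ[R] R) (hu : IsUnit (algebraMap R Rf f)) (s : S) :
    thetaLoc S f Rf Sf β hu (algebraMap S Sf s) = algebraMap R Rf (β s) := by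
  haveI := isLocalizedModule_Sf S f Sf
  exact LinearMap.congr_fun
    (IsLocalizedModule.lift_comp (Submonoid.powers f)
      (IsScalarTower.toAlgHom R S Sf).toLinearMap
      ((Algebra.linearMap R Rf).comp β) (end_units_Rf f Rf hu)) s

lemma cancel_Rf (hu : IsUnit (algebraMap R Rf f)) (k : ℕ) {z₁ z₂ : Rf}
    (h : algebraMap R Rf (f ^ k) * z₁ = algebraMap R Rf (f ^ k) * z₂) : z₁ = z₂ := by
  have h1 : IsUnit (algebraMap R Rf (f ^ k)) := by rw [map_pow]; exact hu.pow k
  exact h1.mul_left_cancel h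

lemma iotaLoc_smul (r : R) (x : Rf) :
    iotaLoc S f Rf Sf (r • x) = r • iotaLoc S f Rf Sf x := by
  rw [Algebra.smul_def, map_mul, iotaLoc_alg, smul_Sf_R S]

end Loc


section Key
set_option linter.unusedSectionVars false
set_option maxHeartbeats 1000000

variable {A R S : Type*} [CommRing A] [CommRing R] [CommRing S]
  [Algebra A R] [Algebra A S] [Algebra R S] [IsScalarTower A R S]
  (β : S →ₗ[R] R) (f : R)
  (Rf : Type*) [CommRing Rf] [Algebra R Rf] [IsLocalization.Away f Rf]
  [Algebra A Rf] [IsScalarTower A R Rf]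
  (Sf : Type*) [CommRing Sf] [Algebra S Sf]
  [IsLocalization.Away (algebraMap R S f) Sf]
  [Algebra A Sf] [IsScalarTower A S Sf]
  [Algebra R Sf] [IsScalarTower R S Sf]
  (huR : IsUnit (algebraMap R Rf f))
  (huS : IsUnit (algebraMap S Sf (algebraMap R S f)))
  (actRf : DAction A R Rf)
  (actSf : DAction A S Sf)

lemma key_lemma
    (hactRf : IsLocalizedDAction (Algebra.linearMap R Rf) (tautDAction A R) actRf)
    (hactSf : IsLocalizedDAction (Algebra.linearMap S Sf) (tautDAction A S) actSf)
    (n : ℕ) (δ : S →ₗ[A] S) (hδ : IsDiffOpOfOrder A n δ) (x : Rf) :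
    actRf.act (restrictOp A R S β δ) x
      = thetaLoc S f Rf Sf β huR (actSf.act δ (iotaLoc S f Rf Sf x)) := by
  induction n generalizing δ x with
  | zero =>
    obtain ⟨s₀, h₀⟩ := hδ
    have hres : restrictOp A R S β δ = LinearMap.mulLeft A (β s₀) := by
      ext y
      rw [restrictOp_apply, h₀, LinearMap.mulLeft_apply, mul_comm s₀, beta_alg_mul,
        mul_comm]
    have hδeq : δ = LinearMap.mulLeft A s₀ := by
      ext y; rw [h₀, LinearMap.mulLeft_apply]
    rw [hres, actRf.act_mulLeft, hδeq, actSf.act_mulLeft]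
    obtain ⟨⟨r, c⟩, hr⟩ := IsLocalization.surj (Submonoid.powers f) x
    obtain ⟨c, k, rfl⟩ := c
    have hx : algebraMap R Rf (f ^ k) * x = algebraMap R Rf r := by
      rw [mul_comm]; exact hr
    apply cancel_Rf f Rf huR k
    have hL : algebraMap R Rf (f ^ k) * (β s₀ • x) = algebraMap R Rf (β s₀ * r) := by
      rw [mul_smul_comm, hx, Algebra.smul_def, ← map_mul]
    rw [hL]
    have h1 : thetaLoc S f Rf Sf β huR ((f ^ k) • (s₀ • iotaLoc S f Rf Sf x))
        = algebraMap R Rf (f ^ k)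
          * thetaLoc S f Rf Sf β huR (s₀ • iotaLoc S f Rf Sf x) := by
      rw [LinearMap.map_smul, Algebra.smul_def]
    rw [← h1]
    have h2 : (f ^ k) • (s₀ • iotaLoc S f Rf Sf x)
        = algebraMap S Sf (s₀ * algebraMap R S r) := by
      rw [smul_Sf_R (S := S), Algebra.smul_def, mul_left_comm,
        ← iotaLoc_alg S f Rf Sf, ← map_mul, hx, iotaLoc_alg, ← map_mul]
    rw [h2, thetaLoc_alg]
    congr 1
    rw [mul_comm s₀, beta_alg_mul]
    exact mul_comm _ _
  | succ n ih =>
    obtain ⟨⟨r, c⟩, hr⟩ := IsLocalization.surj (Submonoid.powers f) x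
    obtain ⟨c, k, rfl⟩ := c
    have hx : algebraMap R Rf (f ^ k) * x = algebraMap R Rf r := by
      rw [mul_comm]; exact hr
    set g : R := f ^ k with hg
    set gS : S := algebraMap R S g with hgS
    set C : S →ₗ[A] S :=
      δ ∘ₗ LinearMap.mulLeft A gS - LinearMap.mulLeft A gS ∘ₗ δ with hC
    have hCord : IsDiffOpOfOrder A n C := hδ gS
    have hδ' : IsDiffOp A δ := ⟨n+1, hδ⟩
    have hresδ : IsDiffOp A (restrictOp A R S β δ) := ⟨n+1, restrictOp_order β hδ⟩
    have hCdop : IsDiffOp A C := ⟨n, hCord⟩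
    have hresC : IsDiffOp A (restrictOp A R S β C) := ⟨n, restrictOp_order β hCord⟩
    -- the commutator identities
    have hcommR : restrictOp A R S β δ ∘ₗ LinearMap.mulLeft A g
        = LinearMap.mulLeft A g ∘ₗ restrictOp A R S β δ + restrictOp A R S β C := by
      have h := restrictOp_commutator β δ g
      rw [← hgS, ← hC] at h
      rw [h]; abel
    have hcommS : δ ∘ₗ LinearMap.mulLeft A gS
        = LinearMap.mulLeft A gS ∘ₗ δ + C := by
      rw [hC]; abel
    apply cancel_Rf f Rf huR k
    rw [← hg]
    -- LHS
    have hL1 : algebraMap R Rf g * actRf.act (restrictOp A R S β δ) x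
        = actRf.act (LinearMap.mulLeft A g ∘ₗ restrictOp A R S β δ) x := by
      rw [actRf.act_comp _ _ (IsDiffOp.mulLeft g) hresδ, LinearMap.comp_apply,
        actRf.act_mulLeft, Algebra.smul_def]
    have hL2 : actRf.act (restrictOp A R S β δ ∘ₗ LinearMap.mulLeft A g) x
        = algebraMap R Rf (restrictOp A R S β δ r) := by
      rw [actRf.act_comp _ _ hresδ (IsDiffOp.mulLeft g), LinearMap.comp_apply,
        actRf.act_mulLeft, Algebra.smul_def, hx]
      have := hactRf (restrictOp A R S β δ) hresδ r
      exact this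
    have hL3 : actRf.act (LinearMap.mulLeft A g ∘ₗ restrictOp A R S β δ) x
        = algebraMap R Rf (restrictOp A R S β δ r)
          - actRf.act (restrictOp A R S β C) x := by
      have h4 : actRf.act (restrictOp A R S β δ ∘ₗ LinearMap.mulLeft A g) x
          = actRf.act (LinearMap.mulLeft A g ∘ₗ restrictOp A R S β δ) x
            + actRf.act (restrictOp A R S β C) x := by
        rw [hcommR, actRf.act_add _ _
          ⟨n+1, (restrictOp_order β hδ).mulLeft_comp g⟩ hresC, LinearMap.add_apply]
      rw [← hL2, h4]; abel
    -- RHS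
    have hR1 : algebraMap R Rf g
          * thetaLoc S f Rf Sf β huR (actSf.act δ (iotaLoc S f Rf Sf x))
        = thetaLoc S f Rf Sf β huR
            (actSf.act (LinearMap.mulLeft A gS ∘ₗ δ) (iotaLoc S f Rf Sf x)) := by
      rw [actSf.act_comp _ _ (IsDiffOp.mulLeft gS) hδ', LinearMap.comp_apply,
        actSf.act_mulLeft, Algebra.smul_def gS, hgS, ← smul_Sf_R S,
        LinearMap.map_smul, Algebra.smul_def]
    have hR2 : actSf.act (δ ∘ₗ LinearMap.mulLeft A gS) (iotaLoc S f Rf Sf x)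
        = algebraMap S Sf (δ (algebraMap R S r)) := by
      rw [actSf.act_comp _ _ hδ' (IsDiffOp.mulLeft gS), LinearMap.comp_apply,
        actSf.act_mulLeft]
      have hgx : gS • iotaLoc S f Rf Sf x = algebraMap S Sf (algebraMap R S r) := by
        rw [Algebra.smul_def, hgS, ← iotaLoc_alg S f Rf Sf, ← map_mul, hx, iotaLoc_alg]
      rw [hgx]
      have := hactSf δ hδ' (algebraMap R S r)
      exact this
    have hR3 : actSf.act (LinearMap.mulLeft A gS ∘ₗ δ) (iotaLoc S f Rf Sf x)
        = algebraMap S Sf (δ (algebraMap R S r))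
          - actSf.act C (iotaLoc S f Rf Sf x) := by
      have h4 : actSf.act (δ ∘ₗ LinearMap.mulLeft A gS) (iotaLoc S f Rf Sf x)
          = actSf.act (LinearMap.mulLeft A gS ∘ₗ δ) (iotaLoc S f Rf Sf x)
            + actSf.act C (iotaLoc S f Rf Sf x) := by
        rw [hcommS, actSf.act_add _ _ ⟨n+1, hδ.mulLeft_comp gS⟩ hCdop,
          LinearMap.add_apply]
      rw [← hR2, h4]; abel
    rw [hL1, hL3, hR1, hR3, map_sub, thetaLoc_alg]
    rw [ih C hCord x, restrictOp_apply]

lemma iota_unit_zpow (z : ℤ) :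
    iotaLoc S f Rf Sf ((huR.unit ^ z : Rfˣ) : Rf) = ((huS.unit ^ z : Sfˣ) : Sf) := by
  have h : Units.map (iotaLoc S f Rf Sf).toMonoidHom huR.unit = huS.unit := by
    ext
    rw [Units.coe_map, RingHom.toMonoidHom_eq_coe, MonoidHom.coe_coe,
      IsUnit.unit_spec, IsUnit.unit_spec, iotaLoc_alg]
  calc iotaLoc S f Rf Sf ((huR.unit ^ z : Rfˣ) : Rf)
      = ((Units.map (iotaLoc S f Rf Sf).toMonoidHom (huR.unit ^ z) : Sfˣ) : Sf) := by
        rw [Units.coe_map]; rfl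
    _ = ((huS.unit ^ z : Sfˣ) : Sf) := by rw [map_zpow, h]

lemma theta_unit_zpow (hβ : ∀ r : R, β (algebraMap R S r) = r) (z : ℤ) :
    thetaLoc S f Rf Sf β huR ((huS.unit ^ z : Sfˣ) : Sf)
      = ((huR.unit ^ z : Rfˣ) : Rf) := by
  have hk : (0:ℤ) ≤ z + z.natAbs := by omega
  obtain ⟨N, hN⟩ : ∃ N : ℕ, (N : ℤ) = z + z.natAbs :=
    ⟨(z + z.natAbs).toNat, Int.toNat_of_nonneg hk⟩
  have hSpow : ∀ M : ℕ, ((huS.unit ^ (M:ℤ) : Sfˣ) : Sf)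
      = algebraMap S Sf (algebraMap R S (f^M)) := by
    intro M
    rw [zpow_natCast, Units.val_pow_eq_pow_val, IsUnit.unit_spec, ← map_pow, ← map_pow]
  have hRpow : ∀ M : ℕ, ((huR.unit ^ (M:ℤ) : Rfˣ) : Rf) = algebraMap R Rf (f^M) := by
    intro M
    rw [zpow_natCast, Units.val_pow_eq_pow_val, IsUnit.unit_spec, ← map_pow]
  apply cancel_Rf f Rf huR z.natAbs
  have h1 : algebraMap R Rf (f ^ z.natAbs)
        * thetaLoc S f Rf Sf β huR ((huS.unit ^ z : Sfˣ) : Sf)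
      = thetaLoc S f Rf Sf β huR
          (algebraMap S Sf (algebraMap R S (f ^ z.natAbs)) * ((huS.unit ^ z : Sfˣ) : Sf)) := by
    rw [← smul_Sf_R S, LinearMap.map_smul, Algebra.smul_def]
  have h2 : algebraMap S Sf (algebraMap R S (f ^ z.natAbs)) * ((huS.unit ^ z : Sfˣ) : Sf)
      = algebraMap S Sf (algebraMap R S (f ^ N)) := by
    rw [← hSpow, ← Units.val_mul, ← zpow_add, show (z.natAbs:ℤ) + z = (N:ℤ) by omega,
      hSpow]
  have h3 : algebraMap R Rf (f ^ z.natAbs) * ((huR.unit ^ z : Rfˣ) : Rf)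
      = algebraMap R Rf (f ^ N) := by
    rw [← hRpow, ← Units.val_mul, ← zpow_add, show (z.natAbs:ℤ) + z = (N:ℤ) by omega,
      hRpow]
  rw [h1, h2, h3, thetaLoc_alg, hβ]

lemma theta_asmul (a : A) (y : Sf) :
    thetaLoc S f Rf Sf β huR (a • y) = a • thetaLoc S f Rf Sf β huR y := by
  rw [Algebra.smul_def, IsScalarTower.algebraMap_apply A S Sf,
    IsScalarTower.algebraMap_apply A R S, ← smul_Sf_R S, LinearMap.map_smul,
    Algebra.smul_def, ← IsScalarTower.algebraMap_apply A R Rf, ← Algebra.smul_def]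

lemma main_eq
    (hactRf : IsLocalizedDAction (Algebra.linearMap R Rf) (tautDAction A R) actRf)
    (hactSf : IsLocalizedDAction (Algebra.linearMap S Sf) (tautDAction A S) actSf)
    (hβ : ∀ r : R, β (algebraMap R S r) = r)
    (m : ℕ) (d : ℕ → (S →ₗ[A] S)) (hd : ∀ j, IsDiffOp A (d j)) (b : Polynomial A)
    (heq : ∀ t : ℤ, (actSf.act (∑ j ∈ Finset.range (m + 1), t ^ j • d j))
        ((huS.unit ^ (t + 1) : Sfˣ) : Sf)
      = Polynomial.eval (t : A) b • ((huS.unit ^ t : Sfˣ) : Sf)) :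
    ∀ t : ℤ, (actRf.act (∑ j ∈ Finset.range (m + 1), t ^ j • restrictOp A R S β (d j)))
        ((huR.unit ^ (t + 1) : Rfˣ) : Rf)
      = Polynomial.eval (t : A) b • ((huR.unit ^ t : Rfˣ) : Rf) := by
  intro t
  have hsum : ∑ j ∈ Finset.range (m+1), t ^ j • restrictOp A R S β (d j)
      = restrictOp A R S β (∑ j ∈ Finset.range (m+1), t ^ j • d j) := by
    rw [restrictOp_sum]
    exact Finset.sum_congr rfl fun j _ => (restrictOp_zsmul β _ _).symm
  have hΔ : IsDiffOp A (∑ j ∈ Finset.range (m+1), t ^ j • d j) :=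
    IsDiffOp.sum _ _ fun j _ => (hd j).zsmul _
  obtain ⟨n, hn⟩ := hΔ
  rw [hsum, key_lemma β f Rf Sf huR actRf actSf hactRf hactSf n _ hn,
    iota_unit_zpow f Rf Sf huR huS, heq t, theta_asmul β f Rf Sf huR,
    theta_unit_zpow β f Rf Sf huR huS hβ t]

end Key


section Closure
set_option linter.unusedSectionVars false

variable {A R Rf : Type*} [CommRing A] [CommRing R] [Algebra A R]
  [CommRing Rf] [Algebra R Rf] [Algebra A Rf] [IsScalarTower A R Rf]
  (f : R) (hu : IsUnit (algebraMap R Rf f)) (act : DAction A R Rf)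

lemma act_zero : act.act 0 = 0 := by
  have h := act.act_add 0 0 IsDiffOp.zero IsDiffOp.zero
  rw [add_zero] at h
  exact (left_eq_add.mp h)

lemma SatisfiesBS.zero : SatisfiesBS f hu act 0 :=
  ⟨0, fun _ => 0, fun _ => IsDiffOp.zero, fun t => by simp [act_zero]⟩

lemma satbs_pad (b : Polynomial A) (m : ℕ) (d : ℕ → (R →ₗ[A] R))
    (hd : ∀ j, IsDiffOp A (d j))
    (heq : ∀ t : ℤ, (act.act (∑ j ∈ Finset.range (m + 1), t ^ j • d j))
        ((hu.unit ^ (t + 1) : Rfˣ) : Rf)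
      = Polynomial.eval (t : A) b • ((hu.unit ^ t : Rfˣ) : Rf))
    (m' : ℕ) (hm : m ≤ m') :
    ∃ d' : ℕ → (R →ₗ[A] R), (∀ j, IsDiffOp A (d' j)) ∧
      ∀ t : ℤ, (act.act (∑ j ∈ Finset.range (m' + 1), t ^ j • d' j))
        ((hu.unit ^ (t + 1) : Rfˣ) : Rf)
      = Polynomial.eval (t : A) b • ((hu.unit ^ t : Rfˣ) : Rf) := by
  refine ⟨fun j => if j < m + 1 then d j else 0, fun j => ?_, fun t => ?_⟩
  · dsimp only; split
    · exact hd j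
    · exact IsDiffOp.zero
  · have hsub : Finset.range (m+1) ⊆ Finset.range (m'+1) :=
      Finset.range_subset_range.mpr (by omega)
    have hs : ∑ j ∈ Finset.range (m'+1), t ^ j • (if j < m + 1 then d j else 0)
        = ∑ j ∈ Finset.range (m+1), t ^ j • d j := by
      rw [← Finset.sum_subset hsub
        (fun j _ hnj => by rw [if_neg (by simpa using hnj), smul_zero])]
      exact Finset.sum_congr rfl fun j hj => by
        rw [if_pos (Finset.mem_range.mp hj)]
    rw [hs, heq t]

lemma SatisfiesBS.add {b₁ b₂ : Polynomial A} (h₁ : SatisfiesBS f hu act b₁)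
    (h₂ : SatisfiesBS f hu act b₂) : SatisfiesBS f hu act (b₁ + b₂) := by
  obtain ⟨m₁, d₁, hd₁, he₁⟩ := h₁
  obtain ⟨m₂, d₂, hd₂, he₂⟩ := h₂
  obtain ⟨d₁', hd₁', he₁'⟩ :=
    satbs_pad f hu act b₁ m₁ d₁ hd₁ he₁ (max m₁ m₂) (le_max_left _ _)
  obtain ⟨d₂', hd₂', he₂'⟩ :=
    satbs_pad f hu act b₂ m₂ d₂ hd₂ he₂ (max m₁ m₂) (le_max_right _ _)
  refine ⟨max m₁ m₂, fun j => d₁' j + d₂' j, fun j => (hd₁' j).add (hd₂' j), fun t => ?_⟩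
  have hΔ₁ : IsDiffOp A (∑ j ∈ Finset.range (max m₁ m₂ + 1), t ^ j • d₁' j) :=
    IsDiffOp.sum _ _ fun j _ => (hd₁' j).zsmul _
  have hΔ₂ : IsDiffOp A (∑ j ∈ Finset.range (max m₁ m₂ + 1), t ^ j • d₂' j) :=
    IsDiffOp.sum _ _ fun j _ => (hd₂' j).zsmul _
  have hsplit : ∑ j ∈ Finset.range (max m₁ m₂ + 1), t ^ j • (d₁' j + d₂' j)
      = (∑ j ∈ Finset.range (max m₁ m₂ + 1), t ^ j • d₁' j)
        + ∑ j ∈ Finset.range (max m₁ m₂ + 1), t ^ j • d₂' j := by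
    rw [← Finset.sum_add_distrib]
    exact Finset.sum_congr rfl fun j _ => smul_add _ _ _
  rw [hsplit, act.act_add _ _ hΔ₁ hΔ₂, LinearMap.add_apply, he₁' t, he₂' t,
    Polynomial.eval_add, add_smul]

lemma SatisfiesBS.X_mul {b : Polynomial A} (h : SatisfiesBS f hu act b) :
    SatisfiesBS f hu act (Polynomial.X * b) := by
  obtain ⟨m, d, hd, heq⟩ := h
  refine ⟨m + 1, fun j => if j = 0 then 0 else d (j-1), fun j => ?_, fun t => ?_⟩
  · dsimp only; split
    · exact IsDiffOp.zero
    · exact hd _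
  · have hΔ : IsDiffOp A (∑ j ∈ Finset.range (m+1), t ^ j • d j) :=
      IsDiffOp.sum _ _ fun j _ => (hd j).zsmul _
    have hshift : ∑ j ∈ Finset.range (m+2), t ^ j • (if j = 0 then 0 else d (j-1))
        = LinearMap.mulLeft A ((t : ℤ) : R)
            ∘ₗ (∑ j ∈ Finset.range (m+1), t ^ j • d j) := by
      rw [Finset.sum_range_succ']
      have h0 : (t:ℤ) ^ 0 • (if (0:ℕ) = 0 then (0 : R →ₗ[A] R) else d (0-1)) = 0 := by
        rw [if_pos rfl, smul_zero]
      rw [h0, add_zero]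
      ext x
      simp only [LinearMap.coe_sum, Finset.sum_apply, LinearMap.smul_apply,
        LinearMap.coe_comp, Function.comp_apply, LinearMap.mulLeft_apply,
        Finset.mul_sum]
      refine Finset.sum_congr rfl fun j _ => ?_
      rw [if_neg (Nat.succ_ne_zero j), Nat.add_sub_cancel, pow_succ', mul_smul,
        zsmul_eq_mul, zsmul_eq_mul]
    rw [hshift, act.act_comp _ _ (IsDiffOp.mulLeft _) hΔ, LinearMap.comp_apply,
      act.act_mulLeft, heq t]
    rw [show ((t:ℤ) : R) = algebraMap A R ((t:ℤ) : A) by rw [map_intCast],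
      algebraMap_smul, smul_smul, Polynomial.eval_mul, Polynomial.eval_X]

lemma SatisfiesBS.C_mul (a : A) {b : Polynomial A} (h : SatisfiesBS f hu act b) :
    SatisfiesBS f hu act (Polynomial.C a * b) := by
  obtain ⟨m, d, hd, heq⟩ := h
  refine ⟨m, fun j => a • d j, fun j => (hd j).asmul a, fun t => ?_⟩
  have hΔ : IsDiffOp A (∑ j ∈ Finset.range (m+1), t ^ j • d j) :=
    IsDiffOp.sum _ _ fun j _ => (hd j).zsmul _
  have hmul : ∑ j ∈ Finset.range (m+1), t ^ j • (a • d j)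
      = LinearMap.mulLeft A (algebraMap A R a)
          ∘ₗ (∑ j ∈ Finset.range (m+1), t ^ j • d j) := by
    ext x
    simp only [LinearMap.coe_sum, Finset.sum_apply, LinearMap.smul_apply,
      LinearMap.coe_comp, Function.comp_apply, LinearMap.mulLeft_apply,
      Finset.mul_sum]
    refine Finset.sum_congr rfl fun j _ => ?_
    rw [mul_smul_comm, ← Algebra.smul_def, smul_comm]
  rw [hmul, act.act_comp _ _ (IsDiffOp.mulLeft _) hΔ, LinearMap.comp_apply,
    act.act_mulLeft, heq t, algebraMap_smul, smul_smul, Polynomial.eval_mul,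
    Polynomial.eval_C]

lemma SatisfiesBS.poly_mul (c : Polynomial A) {b : Polynomial A}
    (h : SatisfiesBS f hu act b) : SatisfiesBS f hu act (c * b) := by
  induction c using Polynomial.induction_on with
  | C a => exact SatisfiesBS.C_mul f hu act a h
  | add p q hp hq => rw [add_mul]; exact SatisfiesBS.add f hu act hp hq
  | monomial n a hn =>
      have h2 := SatisfiesBS.X_mul f hu act hn
      rw [show Polynomial.C a * Polynomial.X ^ (n+1) * b
          = Polynomial.X * (Polynomial.C a * Polynomial.X ^ n * b) by ring] at *
      exact h2

end Closure


/-- Theorem `ThmGralBShyp`.  Let `A ⊆ R ⊆ S` be Noetherian rings such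
that the inclusion `R ⊆ S` has an `R`-linear splitting `β`, and `f ∈ R` nonzero.  If
`δ(s) ∈ D_{S|A}[s]` and `b(s) ∈ A[s]` satisfy `δ(t)·f^{t+1} = b(t)·f^t` in `S_f` for all
`t ∈ ℤ`, then `δ̃(s) = β∘δ(s)|_R ∈ D_{R|A}[s]` satisfies the same equation in `R_f`.
In particular the Bernstein–Sato ideal of `f` over `S` is contained in that over `R`;
hence if `A` is a field and `b^{S_A}_f` exists, then `b^{R_A}_f` exists and divides it. -/
theorem bernsteinSato_of_diffDirectSummand
    (A R S : Type*) [CommRing A] [CommRing R] [CommRing S]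
    [IsNoetherianRing A] [IsNoetherianRing R] [IsNoetherianRing S]
    [Algebra A R] [Algebra A S] [Algebra R S] [IsScalarTower A R S]
    (hAR : Function.Injective (algebraMap A R))
    (hRS : Function.Injective (algebraMap R S))
    (β : S →ₗ[R] R) (hβ : ∀ r : R, β (algebraMap R S r) = r)
    (f : R) (hf : f ≠ 0)
    -- the localization `R_f` with its canonical `D_{R|A}`-structure
    (Rf : Type*) [CommRing Rf] [Algebra R Rf] [IsLocalization.Away f Rf]
    [Algebra A Rf] [IsScalarTower A R Rf]
    (huR : IsUnit (algebraMap R Rf f))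
    (actRf : DAction A R Rf)
    (hactRf : IsLocalizedDAction (Algebra.linearMap R Rf) (tautDAction A R) actRf)
    -- the localization `S_f` with its canonical `D_{S|A}`-structure
    (Sf : Type*) [CommRing Sf] [Algebra S Sf]
    [IsLocalization.Away (algebraMap R S f) Sf]
    [Algebra A Sf] [IsScalarTower A S Sf]
    (huS : IsUnit (algebraMap S Sf (algebraMap R S f)))
    (actSf : DAction A S Sf)
    (hactSf : IsLocalizedDAction (Algebra.linearMap S Sf) (tautDAction A S) actSf)
    -- the Bernstein–Sato data over `S`
    (m : ℕ) (d : ℕ → (S →ₗ[A] S)) (hd : ∀ j, IsDiffOp A (d j)) (b : Polynomial A)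
    (heq : ∀ t : ℤ, (actSf.act (∑ j ∈ Finset.range (m + 1), t ^ j • d j))
        ((huS.unit ^ (t + 1) : Sfˣ) : Sf) =
      Polynomial.eval (t : A) b • ((huS.unit ^ t : Sfˣ) : Sf)) :
    -- (a) the restricted operator `β∘δ(s)|_R` satisfies the same functional equation
    (∀ t : ℤ, (actRf.act (∑ j ∈ Finset.range (m + 1), t ^ j • restrictOp A R S β (d j)))
        ((huR.unit ^ (t + 1) : Rfˣ) : Rf) =
      Polynomial.eval (t : A) b • ((huR.unit ^ t : Rfˣ) : Rf)) ∧
    -- (b) the Bernstein–Sato ideal of `f` over `S` is contained in the one over `R`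
    ({b' : Polynomial A | SatisfiesBS (algebraMap R S f) huS actSf b'} ⊆
      {b' : Polynomial A | SatisfiesBS f huR actRf b'}) ∧
    -- (c) if `A` is a field and the Bernstein–Sato polynomial of `f` over `S` exists,
    -- then the Bernstein–Sato polynomial of `f` over `R` exists and divides it
    (∀ (_ : IsField A) (bS : Polynomial A), bS.Monic →
      SatisfiesBS (algebraMap R S f) huS actSf bS →
      (∀ b' : Polynomial A, SatisfiesBS (algebraMap R S f) huS actSf b' → bS ∣ b') →
      ∃ bR : Polynomial A, bR.Monic ∧ SatisfiesBS f huR actRf bR ∧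
        (∀ b' : Polynomial A, SatisfiesBS f huR actRf b' → bR ∣ b') ∧ bR ∣ bS) := by
  letI : Algebra R Sf := ((algebraMap S Sf).comp (algebraMap R S)).toAlgebra
  haveI : IsScalarTower R S Sf := IsScalarTower.of_algebraMap_eq fun _ => rfl
  have main : ∀ (m : ℕ) (d : ℕ → (S →ₗ[A] S)), (∀ j, IsDiffOp A (d j)) →
      ∀ b : Polynomial A,
      (∀ t : ℤ, (actSf.act (∑ j ∈ Finset.range (m + 1), t ^ j • d j))
          ((huS.unit ^ (t + 1) : Sfˣ) : Sf)
        = Polynomial.eval (t : A) b • ((huS.unit ^ t : Sfˣ) : Sf)) →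
      ∀ t : ℤ, (actRf.act (∑ j ∈ Finset.range (m + 1),
            t ^ j • restrictOp A R S β (d j)))
          ((huR.unit ^ (t + 1) : Rfˣ) : Rf)
        = Polynomial.eval (t : A) b • ((huR.unit ^ t : Rfˣ) : Rf) :=
    fun m d hd b heq =>
      main_eq β f Rf Sf huR huS actRf actSf hactRf hactSf hβ m d hd b heq
  have hmapb : ∀ b' : Polynomial A, SatisfiesBS (algebraMap R S f) huS actSf b' →
      SatisfiesBS f huR actRf b' := by
    rintro b' ⟨m', d', hd', heq'⟩
    exact ⟨m', fun j => restrictOp A R S β (d' j),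
      fun j => (hd' j).imp fun n h => restrictOp_order β h,
      main m' d' hd' b' heq'⟩
  refine ⟨main m d hd b heq, hmapb, ?_⟩
  intro hA bS hmon hsat _
  letI : Field A := hA.toField
  let I : Ideal (Polynomial A) :=
    { carrier := {b' : Polynomial A | SatisfiesBS f huR actRf b'}
      add_mem' := fun h₁ h₂ => SatisfiesBS.add f huR actRf h₁ h₂
      zero_mem' := SatisfiesBS.zero f huR actRf
      smul_mem' := fun c b' hb' => by
        simpa [smul_eq_mul] using SatisfiesBS.poly_mul f huR actRf c hb' }
  have hbSI : bS ∈ I := hmapb bS hsat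
  obtain ⟨g, hg⟩ := (IsPrincipalIdealRing.principal I).principal
  have hgne : g ≠ 0 := by
    rintro rfl
    rw [hg] at hbSI
    exact hmon.ne_zero (zero_dvd_iff.mp (Ideal.mem_span_singleton.mp hbSI))
  have hbRg : g ∣ g * Polynomial.C (g.leadingCoeff)⁻¹ := Dvd.intro _ rfl
  have hgbR : g * Polynomial.C (g.leadingCoeff)⁻¹ ∣ g := by
    refine ⟨Polynomial.C g.leadingCoeff, ?_⟩
    rw [mul_assoc, ← Polynomial.C_mul,
      inv_mul_cancel₀ (Polynomial.leadingCoeff_ne_zero.mpr hgne), Polynomial.C_1,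
      mul_one]
  have hmem : ∀ b' : Polynomial A, b' ∈ I ↔ g ∣ b' := by
    intro b'
    rw [hg]
    exact Ideal.mem_span_singleton
  refine ⟨g * Polynomial.C (g.leadingCoeff)⁻¹,
    Polynomial.monic_mul_leadingCoeff_inv hgne, ?_, ?_, ?_⟩
  · exact (hmem _).mpr hbRg
  · intro b' hb'
    exact dvd_trans hgbR ((hmem b').mp hb')
  · exact dvd_trans hgbR ((hmem bS).mp hbSI)
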